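/- Let G=(V,w,m) be a connected, locally finite weighted graph, let f : V → ℝ satisfy ‖∇f‖_∞ = 1, let ε > 0 and let x₀ ≠ y₀ be vertices with f(x₀) − f(y₀) ≥ d(x₀,y₀) − ε. Define g₀ : B₁(x₀) → ℝ by g₀(w) := min{ f(w), f(x₀) − d(x₀,y₀) + d(y₀,w) } and define g : V → ℝ by g(z) := max_{w ∈ B₁(x₀)} (g₀(w) − d(w,z)). Then: (i) g is 1-Lipschitz with respect to d; (ii) g ≤ f on V; (iii) g(w) = g₀(w) ≥ f(w) − ε for all w ∈ B₁(x₀); and (iv) g(y₀) = g(x₀) − d(x₀,y₀) = f(x₀) − d(x₀,y₀). -/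

import Mathlib

open scoped BigOperators

/-- A weighted graph `G = (V, w, m)`: a symmetric edge-weight function `w`
vanishing on the diagonal, a positive vertex measure `m`, and local finiteness. -/
structure WeightedGraph (V : Type*) where
  w : V → V → ℝ
  m : V → ℝ
  w_symm : ∀ x y, w x y = w y x
  w_nonneg : ∀ x y, 0 ≤ w x y
  w_diag : ∀ x, w x x = 0
  m_pos : ∀ x, 0 < m x
  locFin : ∀ x, {y | 0 < w x y}.Finite

namespace WeightedGraph

variable {V : Type*} (G : WeightedGraph V)

/-- Adjacency: `x ~ y` iff `w x y > 0`. -/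
def Adj (x y : V) : Prop := 0 < G.w x y

/-- The underlying simple graph. -/
def toSimpleGraph : SimpleGraph V where
  Adj x y := 0 < G.w x y
  symm := by refine ⟨?_⟩; intro x y h; rw [G.w_symm y x]; exact h
  loopless := by refine ⟨?_⟩; intro x h; rw [G.w_diag] at h; exact lt_irrefl 0 h

/-- Combinatorial graph distance. -/
noncomputable def d (x y : V) : ℕ := G.toSimpleGraph.dist x y

/-- Transition rate `q(x,y) = w(x,y)/m(x)`. -/
noncomputable def q (x y : V) : ℝ := G.w x y / G.m x

/-- The graph Laplacian `Δf(x) = Σ_y q(x,y) (f(y) - f(x))`. -/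
noncomputable def lap (f : V → ℝ) (x : V) : ℝ := ∑ᶠ y, G.q x y * (f y - f x)

/-- The weighted vertex degree `Deg(x) = Σ_y q(x,y)`. -/
noncomputable def Deg (x : V) : ℝ := ∑ᶠ y, G.q x y

/-- The maximal weighted vertex degree. -/
noncomputable def DegMax : ℝ := ⨆ x, G.Deg x

/-- The minimal transition rate over edges, `q_min = inf_{x ~ y} q(x,y)`. -/
noncomputable def qMin : ℝ := sInf {r : ℝ | ∃ x y, G.Adj x y ∧ r = G.q x y}

/-- `‖∇f‖_∞ = sup_{x ~ y} (f x - f y)/d(x,y)`. -/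
noncomputable def gradNorm (f : V → ℝ) : ℝ :=
  sSup {r : ℝ | ∃ x y, G.Adj x y ∧ r = (f x - f y) / (G.d x y : ℝ)}

/-- The Ollivier curvature
`κ(x,y) = inf { ∇_{xy} Δf : ∇_{yx} f = 1, ‖∇f‖_∞ = 1 }`. -/
noncomputable def kappa (x y : V) : ℝ :=
  sInf {r : ℝ | ∃ f : V → ℝ,
    (f y - f x) / (G.d y x : ℝ) = 1 ∧ G.gradNorm f = 1 ∧
    r = (G.lap f x - G.lap f y) / (G.d x y : ℝ)}

/-- A function is harmonic if `Δf = 0`. -/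
def Harmonic (f : V → ℝ) : Prop := ∀ x, G.lap f x = 0

/-- A transport plan between `x₀ ≠ y₀`: a nonnegative function supported on
`B₁(x₀) × B₁(y₀)` whose marginals on the spheres `S₁(x₀)`, `S₁(y₀)` are
`q(x₀,·)` and `q(y₀,·)` respectively. -/
def IsTransportPlan (x₀ y₀ : V) (ρ : V → V → ℝ) : Prop :=
  (∀ x y, 0 ≤ ρ x y) ∧
  (∀ x y, ρ x y ≠ 0 → G.d x₀ x ≤ 1 ∧ G.d y₀ y ≤ 1) ∧
  (∀ x, G.d x₀ x = 1 → ∑ᶠ y, ρ x y = G.q x₀ x) ∧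
  (∀ y, G.d y₀ y = 1 → ∑ᶠ x, ρ x y = G.q y₀ y)

/-- The transport functional `Σ_{x,y} ρ(x,y) (1 - d(x,y)/d(x₀,y₀))`. -/
noncomputable def transportCost (x₀ y₀ : V) (ρ : V → V → ℝ) : ℝ :=
  ∑ᶠ x, ∑ᶠ y, ρ x y * (1 - (G.d x y : ℝ) / (G.d x₀ y₀ : ℝ))

/-- An optimal transport plan attains the supremum of the transport functional. -/
def IsOptimalTransportPlan (x₀ y₀ : V) (ρ : V → V → ℝ) : Prop :=
  G.IsTransportPlan x₀ y₀ ρ ∧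
  ∀ ρ' : V → V → ℝ, G.IsTransportPlan x₀ y₀ ρ' →
    G.transportCost x₀ y₀ ρ' ≤ G.transportCost x₀ y₀ ρ

end WeightedGraph

/-!
A function that is 1-Lipschitz on a set `B` extends to a 1-Lipschitz function on the whole graph
by `g z = sup_{u ∈ B} (g₀ u - d(u,z))`, and this extension lies below every 1-Lipschitz function
dominating `g₀` on `B`. Here `g₀` is the minimum of the 1-Lipschitz functions `f` and
`f x₀ - d(x₀,y₀) + d(y₀,·)`, so `g ≤ f`. At `y₀` the second function gives the upper bound
`g y₀ ≤ f x₀ - d(x₀,y₀)`, attained by `u = x₀`, and near-optimality of `(x₀,y₀)` for `f`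
gives `g₀ ≥ f - ε`.
-/

namespace SimpleGraph

variable {V : Type*} {H : SimpleGraph V}

theorem Walk.sub_le_length {f : V → ℝ} (hf : ∀ x y, H.Adj x y → f x - f y ≤ 1) {a b : V}
    (p : H.Walk a b) : f a - f b ≤ p.length := by
  induction p with
  | nil => simp
  | cons hadj _ ih =>
    rw [Walk.length_cons, Nat.cast_succ]
    linarith [hf _ _ hadj]

theorem Connected.sub_le_dist_of_forall_adj (hH : H.Connected) {f : V → ℝ}
    (hf : ∀ x y, H.Adj x y → f x - f y ≤ 1) (a b : V) : f a - f b ≤ H.dist a b := by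
  obtain ⟨p, hp⟩ := hH.exists_walk_length_eq_dist a b
  exact hp ▸ p.sub_le_length hf

theorem Connected.dist_triangle_real (hH : H.Connected) (u v w : V) :
    (H.dist u w : ℝ) ≤ H.dist u v + H.dist v w := by
  exact_mod_cast hH.dist_triangle

theorem Connected.min_sub_min_le_dist (hH : H.Connected) {f : V → ℝ}
    (hf : ∀ a b, f a - f b ≤ H.dist a b) (y : V) (c : ℝ) (u v : V) :
    min (f u) (c + H.dist y u) - min (f v) (c + H.dist y v) ≤ H.dist u v := by
  have hvu : (H.dist v u : ℝ) = H.dist u v := by rw [dist_comm]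
  have hmin : min (f u) (c + H.dist y u) ≤
      min (f v + H.dist u v) (c + H.dist y v + H.dist u v) :=
    min_le_min (by linarith [hf u v]) (by linarith [hH.dist_triangle_real y v u])
  rw [min_add_add_right] at hmin
  linarith

/-- The smallest 1-Lipschitz extension of `g₀` from `B`, for the graph distance. -/
noncomputable def lipschitzExtension (H : SimpleGraph V) (B : Set V) (g₀ : V → ℝ) (z : V) : ℝ :=
  sSup {r : ℝ | ∃ u ∈ B, r = g₀ u - H.dist u z}

section LipschitzExtension

variable {B : Set V} {g₀ : V → ℝ}

theorem lipschitzExtension_le (hB : B.Nonempty) {z : V} {c : ℝ}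
    (h : ∀ u ∈ B, g₀ u - H.dist u z ≤ c) : H.lipschitzExtension B g₀ z ≤ c := by
  obtain ⟨u₀, hu₀⟩ := hB
  refine csSup_le ⟨_, u₀, hu₀, rfl⟩ ?_
  rintro r ⟨u, hu, rfl⟩
  exact h u hu

variable (hH : H.Connected) (hg₀ : ∀ u ∈ B, ∀ v ∈ B, g₀ u - g₀ v ≤ H.dist u v)
include hH hg₀

theorem le_lipschitzExtension {u : V} (hu : u ∈ B) (z : V) :
    g₀ u - H.dist u z ≤ H.lipschitzExtension B g₀ z := by
  refine le_csSup ⟨g₀ u + H.dist z u, ?_⟩ ⟨u, hu, rfl⟩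
  rintro r ⟨v, hv, rfl⟩
  linarith [hg₀ v hv u hu, hH.dist_triangle_real v z u]

theorem lipschitzExtension_eq_of_forall_le {u : V} (hu : u ∈ B) {z : V}
    (h : ∀ v ∈ B, g₀ v - H.dist v z ≤ g₀ u - H.dist u z) :
    H.lipschitzExtension B g₀ z = g₀ u - H.dist u z :=
  le_antisymm (lipschitzExtension_le ⟨u, hu⟩ h) (le_lipschitzExtension hH hg₀ hu z)

theorem lipschitzExtension_eq_of_mem {u : V} (hu : u ∈ B) :
    H.lipschitzExtension B g₀ u = g₀ u := by
  have h := lipschitzExtension_eq_of_forall_le hH hg₀ hu fun v hv => by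
    rw [dist_self, Nat.cast_zero, sub_zero]
    linarith [hg₀ v hv u hu]
  rwa [dist_self, Nat.cast_zero, sub_zero] at h

theorem lipschitzExtension_sub_le (hB : B.Nonempty) (a b : V) :
    H.lipschitzExtension B g₀ a - H.lipschitzExtension B g₀ b ≤ H.dist a b := by
  have h : H.lipschitzExtension B g₀ a ≤ H.lipschitzExtension B g₀ b + H.dist a b :=
    lipschitzExtension_le hB fun u hu => by
      linarith [le_lipschitzExtension hH hg₀ hu b, hH.dist_triangle_real u a b]
  linarith

theorem abs_lipschitzExtension_sub_le (hB : B.Nonempty) (a b : V) :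
    |H.lipschitzExtension B g₀ a - H.lipschitzExtension B g₀ b| ≤ H.dist a b := by
  refine abs_sub_le_iff.2 ⟨lipschitzExtension_sub_le hH hg₀ hB a b, ?_⟩
  rw [dist_comm]
  exact lipschitzExtension_sub_le hH hg₀ hB b a

omit hH hg₀ in
theorem lipschitzExtension_le_of_le (hB : B.Nonempty) {f : V → ℝ}
    (hf : ∀ a b, f a - f b ≤ H.dist a b) (hle : ∀ u ∈ B, g₀ u ≤ f u) (z : V) :
    H.lipschitzExtension B g₀ z ≤ f z :=
  lipschitzExtension_le hB fun u hu => by linarith [hle u hu, hf u z]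

end LipschitzExtension

end SimpleGraph

namespace WeightedGraph

variable {V : Type*} (G : WeightedGraph V)

theorem d_comm (x y : V) : G.d x y = G.d y x := SimpleGraph.dist_comm

theorem sub_le_gradNorm_of_adj {f : V → ℝ} (hf : G.gradNorm f ≠ 0) {x y : V} (h : G.Adj x y) :
    f x - f y ≤ G.gradNorm f := by
  have hbdd : BddAbove {r : ℝ | ∃ x y, G.Adj x y ∧ r = (f x - f y) / (G.d x y : ℝ)} := by
    by_contra hnot
    exact hf (Real.sSup_of_not_bddAbove hnot)
  have hd : G.d x y = 1 := SimpleGraph.dist_eq_one_iff_adj.2 h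
  have hmem := le_csSup hbdd ⟨x, y, h, rfl⟩
  rwa [hd, Nat.cast_one, div_one] at hmem

theorem sub_le_d_of_gradNorm_eq_one (hconn : G.toSimpleGraph.Connected) {f : V → ℝ}
    (hf : G.gradNorm f = 1) (a b : V) : f a - f b ≤ G.d a b :=
  hconn.sub_le_dist_of_forall_adj
    (fun _ _ h => hf ▸ G.sub_le_gradNorm_of_adj (by rw [hf]; exact one_ne_zero) h) a b

end WeightedGraph

theorem lipschitz_extension_properties_general
    {V : Type*} (G : WeightedGraph V)
    (hconn : G.toSimpleGraph.Connected)
    (f : V → ℝ) (hf : G.gradNorm f = 1) (ε : ℝ) (hε : 0 < ε)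
    (x₀ y₀ : V)
    (hfd : (G.d x₀ y₀ : ℝ) - ε ≤ f x₀ - f y₀)
    (g₀ : V → ℝ)
    (hg₀ : ∀ u, G.d x₀ u ≤ 1 →
      g₀ u = min (f u) (f x₀ - (G.d x₀ y₀ : ℝ) + (G.d y₀ u : ℝ)))
    (g : V → ℝ)
    (hg : ∀ z, g z = sSup {r : ℝ | ∃ u, G.d x₀ u ≤ 1 ∧ r = g₀ u - (G.d u z : ℝ)}) :
    (∀ a b : V, |g a - g b| ≤ (G.d a b : ℝ)) ∧
    (∀ z, g z ≤ f z) ∧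
    (∀ u, G.d x₀ u ≤ 1 → g u = g₀ u ∧ f u - ε ≤ g u) ∧
    (g y₀ = g x₀ - (G.d x₀ y₀ : ℝ) ∧ g y₀ = f x₀ - (G.d x₀ y₀ : ℝ)) := by
  set H := G.toSimpleGraph
  set B : Set V := {u | G.d x₀ u ≤ 1}
  have hx₀ : x₀ ∈ B := by simp [B, WeightedGraph.d]
  have hflip : ∀ a b, f a - f b ≤ H.dist a b := G.sub_le_d_of_gradNorm_eq_one hconn hf
  have hg₀f : ∀ u ∈ B, g₀ u ≤ f u := fun u hu => (hg₀ u hu).trans_le (min_le_left _ _)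
  have hg₀lip : ∀ u ∈ B, ∀ v ∈ B, g₀ u - g₀ v ≤ H.dist u v := fun u hu v hv => by
    rw [hg₀ u hu, hg₀ v hv]
    exact hconn.min_sub_min_le_dist hflip y₀ _ u v
  have hg₀x₀ : g₀ x₀ = f x₀ := by simp [hg₀ x₀ hx₀, G.d_comm y₀ x₀]
  obtain rfl : g = H.lipschitzExtension B g₀ := funext hg
  have hgx₀ : H.lipschitzExtension B g₀ x₀ = f x₀ :=
    (SimpleGraph.lipschitzExtension_eq_of_mem hconn hg₀lip hx₀).trans hg₀x₀
  have hgy₀ : H.lipschitzExtension B g₀ y₀ = f x₀ - G.d x₀ y₀ := by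
    refine (SimpleGraph.lipschitzExtension_eq_of_forall_le hconn hg₀lip hx₀ fun u hu => ?_).trans
      (by rw [hg₀x₀]; rfl)
    have hu' := (hg₀ u hu).trans_le (min_le_right _ _)
    rw [G.d_comm y₀ u] at hu'
    change g₀ u - (G.d u y₀ : ℝ) ≤ g₀ x₀ - G.d x₀ y₀
    linarith
  refine ⟨SimpleGraph.abs_lipschitzExtension_sub_le hconn hg₀lip ⟨x₀, hx₀⟩,
    SimpleGraph.lipschitzExtension_le_of_le ⟨x₀, hx₀⟩ hflip hg₀f,
    fun u hu => ⟨SimpleGraph.lipschitzExtension_eq_of_mem hconn hg₀lip hu, ?_⟩,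
    by rw [hgy₀, hgx₀], hgy₀⟩
  rw [SimpleGraph.lipschitzExtension_eq_of_mem hconn hg₀lip hu, hg₀ u hu]
  refine le_min (by linarith) ?_
  have hfu : f u - f y₀ ≤ G.d y₀ u := G.d_comm y₀ u ▸ hflip u y₀
  linarith

/-- Let `f` have `‖∇f‖_∞ = 1`, `ε > 0` and `x₀ ≠ y₀` with
`f(x₀) - f(y₀) ≥ d(x₀,y₀) - ε`. With
`g₀(w) = min (f w) (f x₀ - d(x₀,y₀) + d(y₀,w))` on `B₁(x₀)` and
`g(z) = max_{w ∈ B₁(x₀)} (g₀ w - d(w,z))`, we have: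
(i) `g` is 1-Lipschitz w.r.t. `d`; (ii) `g ≤ f`;
(iii) `g = g₀ ≥ f - ε` on `B₁(x₀)`;
(iv) `g(y₀) = g(x₀) - d(x₀,y₀) = f(x₀) - d(x₀,y₀)`. -/
theorem lipschitz_extension_properties
    {V : Type*} [Countable V] (G : WeightedGraph V)
    (hconn : G.toSimpleGraph.Connected)
    (f : V → ℝ) (hf : G.gradNorm f = 1) (ε : ℝ) (hε : 0 < ε)
    (x₀ y₀ : V) (hxy : x₀ ≠ y₀)
    (hfd : (G.d x₀ y₀ : ℝ) - ε ≤ f x₀ - f y₀)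
    (g₀ : V → ℝ)
    (hg₀ : ∀ u, G.d x₀ u ≤ 1 →
      g₀ u = min (f u) (f x₀ - (G.d x₀ y₀ : ℝ) + (G.d y₀ u : ℝ)))
    (g : V → ℝ)
    (hg : ∀ z, g z = sSup {r : ℝ | ∃ u, G.d x₀ u ≤ 1 ∧ r = g₀ u - (G.d u z : ℝ)}) :
    (∀ a b : V, |g a - g b| ≤ (G.d a b : ℝ)) ∧
    (∀ z, g z ≤ f z) ∧
    (∀ u, G.d x₀ u ≤ 1 → g u = g₀ u ∧ f u - ε ≤ g u) ∧
    (g y₀ = g x₀ - (G.d x₀ y₀ : ℝ) ∧ g y₀ = f x₀ - (G.d x₀ y₀ : ℝ)) :=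
  lipschitz_extension_properties_general G hconn f hf ε hε x₀ y₀ hfd g₀ hg₀ g hg
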